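/- arXiv:2509.21083 — 5 statements merged into one kernel-verified Lean document; each statement's English description precedes it below -/
import Mathlib

section
/- Let r ≥ 5 be a prime, ζ a primitive r-th root of unity, K = ℚ(ζ + ζ⁻¹), and for 1 ≤ j ≤ (r-1)/2 set θ_j = ζ^j + ζ^{-j}. Then θ_j + 2 is a unit in the ring of integers of K. -/
/-!
Put `ξ = ζ ^ j`, a root of unity of odd order `r` different from `1`. Then
`θ + 2 = ξ + ξ⁻¹ + 2 = ξ⁻¹ (1 + ξ) ^ 2`, and `1 + ξ` is a unit: since `ξ = (ξ ^ 2) ^ ((r + 1) / 2)`,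
`1 - ξ ^ 2 = (1 - ξ) (1 + ξ)` divides `1 - ξ`. So `θ + 2` is a unit in the ring of integers of
`ℚ(ζ)`, hence in that of `K`, over which it is integral.
-/

open NumberField IntermediateField

theorem isUnit_one_add_of_pow_eq_one {R : Type*} [CommRing R] [IsDomain R] {ξ : R} {n : ℕ}
    (hn : Odd n) (hξn : ξ ^ n = 1) (hξ1 : ξ ≠ 1) : IsUnit (1 + ξ) := by
  obtain ⟨m, rfl⟩ := hn
  have hξ : (ξ ^ 2) ^ (m + 1) = ξ := by
    rw [← pow_mul, show 2 * (m + 1) = (2 * m + 1) + 1 by ring, pow_succ, hξn, one_mul]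
  obtain ⟨c, hc⟩ := one_sub_dvd_one_sub_pow (ξ ^ 2) (m + 1)
  rw [hξ] at hc
  refine IsUnit.of_mul_eq_one c (mul_left_cancel₀ (sub_ne_zero.2 hξ1.symm) ?_)
  linear_combination -hc

theorem isUnit_add_add_two_of_mul_eq_one {R : Type*} [CommRing R] {x y : R} (hxy : x * y = 1)
    (hx : IsUnit (1 + x)) : IsUnit (x + y + 2) := by
  rw [show x + y + 2 = y * (1 + x) ^ 2 by linear_combination (-(2 + x)) * hxy]
  exact (IsUnit.of_mul_eq_one_right x hxy).mul (hx.pow 2)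

theorem theta_add_two_isUnit_general (r : ℕ+) (hr : (r : ℕ).Prime)
    (ζ : CyclotomicField r ℚ) (hζ : IsPrimitiveRoot ζ (r : ℕ))
    (K : IntermediateField ℚ (CyclotomicField r ℚ))
    (j : ℕ) (hj1 : 1 ≤ j) (hj2 : j ≤ ((r : ℕ) - 1) / 2)
    (θ : 𝓞 K)
    (hθ : algebraMap K (CyclotomicField r ℚ) (θ : K) = ζ ^ j + ζ⁻¹ ^ j) :
    IsUnit (θ + 2) := by
  have hodd : Odd (r : ℕ) := hr.odd_of_ne_two (by omega)
  set ξ := hζ.toInteger ^ j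
  have hξr : ξ ^ (r : ℕ) = 1 := by
    rw [← pow_mul, mul_comm, pow_mul, hζ.toInteger_isPrimitiveRoot.pow_eq_one, one_pow]
  have hξ1 : ξ ≠ 1 := hζ.toInteger_isPrimitiveRoot.pow_ne_one_of_pos_of_lt (by omega) (by omega)
  have hξinv : ξ * hζ.inv.toInteger ^ j = 1 :=
    RingOfIntegers.ext <| by
      change ζ ^ j * ζ⁻¹ ^ j = 1
      rw [← mul_pow, mul_inv_cancel₀ (hζ.ne_zero r.ne_zero), one_pow]
  have hmap : algebraMap (𝓞 K) (𝓞 (CyclotomicField r ℚ)) (θ + 2) = ξ + hζ.inv.toInteger ^ j + 2 :=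
    RingOfIntegers.ext <| by
      change algebraMap K _ ((θ : K) + 2) = ζ ^ j + ζ⁻¹ ^ j + 2
      rw [map_add, hθ, map_ofNat]
  refine IsUnit.of_map (algebraMap (𝓞 K) (𝓞 (CyclotomicField r ℚ))) _ ?_
  rw [hmap]
  exact isUnit_add_add_two_of_mul_eq_one hξinv (isUnit_one_add_of_pow_eq_one hodd hξr hξ1)

theorem theta_add_two_isUnit (r : ℕ+) (hr : (r : ℕ).Prime) (hr5 : 5 ≤ (r : ℕ))
    (ζ : CyclotomicField r ℚ) (hζ : IsPrimitiveRoot ζ (r : ℕ))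
    (K : IntermediateField ℚ (CyclotomicField r ℚ)) (hK : K = ℚ⟮ζ + ζ⁻¹⟯)
    (j : ℕ) (hj1 : 1 ≤ j) (hj2 : j ≤ ((r : ℕ) - 1) / 2)
    (θ : 𝓞 K)
    (hθ : algebraMap K (CyclotomicField r ℚ) (θ : K) = ζ ^ j + ζ⁻¹ ^ j) :
    IsUnit (θ + 2) :=
  theta_add_two_isUnit_general r hr ζ hζ K j hj1 hj2 θ hθ
end

section
/- Let r ≥ 5 be a prime, ζ a primitive r-th root of unity, K = ℚ(ζ + ζ⁻¹), and 𝔯 the unique prime of O_K above r. For 1 ≤ j < k ≤ (r-1)/2, the principal ideal generated by θ_j − θ_k equals 𝔯, where θ_j = ζ^j + ζ^{-j}. -/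
/-!
Write `z` for `ζ` viewed in `𝓞 ℚ(ζ)`. Since `ζ⁻¹ ^ a = ζ ^ (r - a)`,
`θⱼ - θₖ = z ^ j (z ^ (k - j) - 1) (z ^ (r - j - k) - 1)`, and both factors are associated with
`z - 1`, so `θⱼ - θₖ` is associated with `(z - 1) ^ 2` in `𝓞 ℚ(ζ)`. The automorphism `ζ ↦ ζ⁻¹`
fixes `K` but not `ζ`, so `[ℚ(ζ) : K] = 2`; as `N(z - 1) = r`, this gives
`|N_{K/ℚ}(θⱼ - θₖ)| = r`. Hence `(θⱼ - θₖ)` is a prime of `𝓞 K` containing `r`, and like `𝔯` it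
is the contraction of `(z - 1)`, the only prime of `𝓞 ℚ(ζ)` above `r`.
-/

open NumberField IntermediateField Polynomial

section AddInv

variable {F L : Type*} [Field F] [Field L] [Algebra F L]

theorem aeval_quadratic_adjoin_add_inv_eq_zero {x : L} (hx : x ≠ 0) :
    aeval x (X ^ 2 - C (AdjoinSimple.gen F (x + x⁻¹)) * X + 1) = 0 := by
  simp only [map_add, map_sub, map_mul, map_pow, aeval_X, aeval_C, map_one,
    AdjoinSimple.algebraMap_gen]
  field_simp
  ring

theorem finrank_adjoin_add_inv_eq_two {x : L} (htop : F⟮x⟯ = ⊤) (hx : x ∉ F⟮x + x⁻¹⟯) :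
    Module.finrank F⟮x + x⁻¹⟯ L = 2 := by
  have hx0 : x ≠ 0 := by rintro rfl; exact hx (zero_mem _)
  have hdeg : (X ^ 2 - C (AdjoinSimple.gen F (x + x⁻¹)) * X + 1).natDegree = 2 := by
    compute_degree!
  have hmonic : (X ^ 2 - C (AdjoinSimple.gen F (x + x⁻¹)) * X + 1).Monic := by monicity!
  have hroot := aeval_quadratic_adjoin_add_inv_eq_zero (F := F) hx0
  have hint : IsIntegral F⟮x + x⁻¹⟯ x := ⟨_, hmonic, hroot⟩
  have hle := natDegree_le_natDegree (minpoly.min _ x hmonic hroot)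
  have hge := (minpoly.two_le_natDegree_iff hint).mpr (by simpa using hx)
  rw [← finrank_top', ← adjoin_eq_top_of_adjoin_eq_top F htop, adjoin.finrank hint]
  omega

theorem notMem_adjoin_add_inv_of_algEquiv_apply_eq_inv (σ : L ≃ₐ[F] L) {x : L}
    (hσ : σ x = x⁻¹) (hx : x⁻¹ ≠ x) : x ∉ F⟮x + x⁻¹⟯ := by
  intro hmem
  have hσ_fix : σ ∈ MulAction.stabilizer (L ≃ₐ[F] L) (x + x⁻¹) := by
    rw [MulAction.mem_stabilizer_iff, AlgEquiv.smul_def, map_add, map_inv₀, hσ, inv_inv,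
      add_comm]
  have hle : F⟮x + x⁻¹⟯ ≤ fixedField (Subgroup.zpowers σ) := by
    rw [adjoin_simple_le_iff, mem_fixedField_iff]
    exact fun τ hτ ↦ Subgroup.zpowers_le.mpr hσ_fix hτ
  exact hx (hσ.symm.trans ((mem_fixedField_iff _ x).mp (hle hmem) σ (Subgroup.mem_zpowers σ)))

end AddInv

theorem pow_add_pow_sub_sub_eq_mul {R : Type*} [CommRing R] (z : R) {n j k : ℕ} (hjk : j ≤ k)
    (hkn : j + k ≤ n) :
    z ^ j + z ^ (n - j) - (z ^ k + z ^ (n - k)) =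
      z ^ j * ((z ^ (k - j) - 1) * (z ^ (n - (j + k)) - 1)) := by
  obtain ⟨d, rfl⟩ := Nat.exists_eq_add_of_le hjk
  obtain ⟨m, rfl⟩ := Nat.exists_eq_add_of_le hkn
  rw [show j + (j + d) + m - j = j + d + m by omega,
    show j + (j + d) + m - (j + d) = j + m by omega, show j + d - j = d by omega,
    Nat.add_sub_cancel_left]
  ring

theorem Algebra.norm_int_algebraMap {K L : Type*} [Field K] [NumberField K] [Field L]
    [NumberField L] [Algebra K L] (x : 𝓞 K) :
    Algebra.norm ℤ (algebraMap (𝓞 K) (𝓞 L) x) = Algebra.norm ℤ x ^ Module.finrank K L := by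
  apply Int.cast_injective (α := ℚ)
  rw [Int.cast_pow, Algebra.coe_norm_int, Algebra.coe_norm_int, ← Algebra.norm_norm (S := K),
    ← map_pow]
  exact congrArg _ (Algebra.norm_algebraMap _)

theorem Ideal.liesOver_span_natCast_of_mem {S : Type*} [CommRing S] (p : ℕ) [Fact p.Prime]
    (P : Ideal S) [P.IsPrime] (hpP : (p : S) ∈ P) : P.LiesOver (span {(p : ℤ)}) := by
  rw [liesOver_iff]
  refine (Int.ideal_span_isMaximal_of_prime p).eq_of_le IsPrime.ne_top' ?_
  rwa [span_singleton_le_iff_mem, mem_comap, algebraMap_int_eq, map_natCast]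

namespace IsPrimitiveRoot

theorem inv_ne_self {K : Type*} [Field K] {ζ : K} {n : ℕ} (hζ : IsPrimitiveRoot ζ n)
    (hn : 2 < n) : ζ⁻¹ ≠ ζ := by
  intro h
  have hsq : ζ ^ 2 = 1 := by
    rw [sq]; nth_rewrite 1 [← h]; exact inv_mul_cancel₀ (hζ.ne_zero (by omega))
  have := Nat.le_of_dvd two_pos (hζ.dvd_of_pow_eq_one 2 hsq)
  omega

theorem associated_sub_one_sq_pow_add_pow_sub_pow_add_pow {R : Type*} [CommRing R] [IsDomain R]
    {z : R} {p j k : ℕ} (hz : IsPrimitiveRoot z p) (hp : p.Prime) (hjk : j < k)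
    (hjkp : j + k < p) :
    Associated ((z - 1) ^ 2) (z ^ j + z ^ (p - j) - (z ^ k + z ^ (p - k))) := by
  have hcop (m : ℕ) (hm : 0 < m) (hmp : m < p) : m.Coprime p :=
    (Nat.coprime_of_lt_prime hm.ne' hmp hp).symm
  rw [pow_add_pow_sub_sub_eq_mul z hjk.le hjkp.le, sq]
  refine (Associated.mul_mul ?_ ?_).trans
    (associated_unit_mul_left _ _ ((hz.isUnit hp.ne_zero).pow j)).symm
  · exact hz.associated_sub_one_pow_sub_one_of_coprime (hcop _ (by omega) (by omega))
  · exact hz.associated_sub_one_pow_sub_one_of_coprime (hcop _ (by omega) (by omega))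

section Cyclotomic

variable {n : ℕ} [NeZero n] {L : Type*} [Field L] [CharZero L] [IsCyclotomicExtension {n} ℚ L]
  {ζ : L}

theorem exists_algEquiv_apply_eq_inv (hζ : IsPrimitiveRoot ζ n) :
    ∃ σ : L ≃ₐ[ℚ] L, σ ζ = ζ⁻¹ := by
  have hmin : minpoly ℚ (hζ.powerBasis ℚ).gen = minpoly ℚ (hζ.inv.powerBasis ℚ).gen := by
    simp only [powerBasis_gen, ← cyclotomic_eq_minpoly_rat hζ (NeZero.pos n),
      ← cyclotomic_eq_minpoly_rat hζ.inv (NeZero.pos n)]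
  exact ⟨_, PowerBasis.equivOfMinpoly_gen _ _ hmin⟩

theorem finrank_adjoin_add_inv (hζ : IsPrimitiveRoot ζ n) (hn : 2 < n) :
    Module.finrank ℚ⟮ζ + ζ⁻¹⟯ L = 2 :=
  have ⟨σ, hσ⟩ := hζ.exists_algEquiv_apply_eq_inv
  finrank_adjoin_add_inv_eq_two
    (adjoin_eq_top_of_algebra _ _ (IsCyclotomicExtension.adjoin_primitive_root_eq_top hζ))
    (notMem_adjoin_add_inv_of_algEquiv_apply_eq_inv σ hσ (hζ.inv_ne_self hn))

end Cyclotomic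

section PrimeCyclotomic

variable {p : ℕ} [Fact p.Prime] {L : Type*} [Field L] [NumberField L]
  [IsCyclotomicExtension {p} ℚ L] {ζ : L} {K : Type*} [Field K] [Algebra K L]

theorem absNorm_span_eq_of_associated_toInteger_sub_one_sq [NumberField K]
    (hζ : IsPrimitiveRoot ζ p) (hp2 : p ≠ 2) (hK : Module.finrank K L = 2) {x : 𝓞 K}
    (hx : Associated ((hζ.toInteger - 1) ^ 2) (algebraMap (𝓞 K) (𝓞 L) x)) :
    Ideal.absNorm (Ideal.span {x}) = p := by
  have h := Int.natAbs_eq_iff_associated.mpr (hx.map (Algebra.norm ℤ))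
  rw [map_pow, hζ.norm_toInteger_sub_one_of_prime_ne_two' hp2, Algebra.norm_int_algebraMap, hK,
    Int.natAbs_pow, Int.natAbs_pow, Int.natAbs_natCast] at h
  rw [Ideal.absNorm_span_singleton]
  exact (Nat.pow_left_injective two_ne_zero h).symm

theorem eq_comap_span_toInteger_sub_one (hζ : IsPrimitiveRoot ζ p) (P : Ideal (𝓞 K))
    [P.IsPrime] (hpP : (p : 𝓞 K) ∈ P) :
    P = (Ideal.span {hζ.toInteger - 1}).comap (algebraMap (𝓞 K) (𝓞 L)) := by
  obtain ⟨Q, hQ, hQP⟩ := Ideal.nonempty_primesOver (S := 𝓞 L) P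
  have hpQ : (p : 𝓞 L) ∈ Q := by
    simpa using (Ideal.mem_of_liesOver Q P (p : 𝓞 K)).mp hpP
  have := Ideal.liesOver_span_natCast_of_mem p Q hpQ
  rw [IsCyclotomicExtension.Rat.eq_span_zeta_sub_one_of_liesOver' p L hζ Q] at hQP
  exact (Ideal.liesOver_iff _ _).mp hQP

end PrimeCyclotomic

end IsPrimitiveRoot

theorem span_theta_sub_theta_eq_general (r : ℕ+) (hr : (r : ℕ).Prime)
    (ζ : CyclotomicField r ℚ) (hζ : IsPrimitiveRoot ζ (r : ℕ))
    (K : IntermediateField ℚ (CyclotomicField r ℚ)) (hK : K = ℚ⟮ζ + ζ⁻¹⟯)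
    (𝔯 : Ideal (𝓞 K)) (h𝔯 : 𝔯.IsPrime) (h𝔯r : ((r : ℕ) : 𝓞 K) ∈ 𝔯)
    (j k : ℕ) (hjk : j < k) (hk : k ≤ ((r : ℕ) - 1) / 2)
    (θj θk : 𝓞 K)
    (hθj : algebraMap K (CyclotomicField r ℚ) (θj : K) = ζ ^ j + ζ⁻¹ ^ j)
    (hθk : algebraMap K (CyclotomicField r ℚ) (θk : K) = ζ ^ k + ζ⁻¹ ^ k) :
    Ideal.span {θj - θk} = 𝔯 := by
  subst hK
  have : Fact (r : ℕ).Prime := ⟨hr⟩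
  have : NeZero ((r : ℕ) : ℚ) := ⟨by simp⟩
  have : IsCyclotomicExtension {(r : ℕ)} ℚ (CyclotomicField r ℚ) :=
    CyclotomicField.isCyclotomicExtension _ _
  have hjkr : j + k < (r : ℕ) := by omega
  have hinv (a : ℕ) (ha : a ≤ r) : ζ⁻¹ ^ a = ζ ^ ((r : ℕ) - a) := by
    rw [pow_sub₀ _ (hζ.ne_zero r.ne_zero) ha, hζ.pow_eq_one, one_mul, inv_pow]
  have hθ : algebraMap _ (𝓞 (CyclotomicField r ℚ)) (θj - θk) =
      hζ.toInteger ^ j + hζ.toInteger ^ ((r : ℕ) - j) -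
        (hζ.toInteger ^ k + hζ.toInteger ^ ((r : ℕ) - k)) := by
    apply RingOfIntegers.ext
    change algebraMap _ (CyclotomicField r ℚ) (θj : ℚ⟮ζ + ζ⁻¹⟯) -
      algebraMap _ (CyclotomicField r ℚ) (θk : ℚ⟮ζ + ζ⁻¹⟯) = _
    rw [hθj, hθk, hinv j (by omega), hinv k (by omega)]
    push_cast
    rfl
  have hassoc := hζ.toInteger_isPrimitiveRoot.associated_sub_one_sq_pow_add_pow_sub_pow_add_pow
    hr hjk hjkr
  have hnorm := hζ.absNorm_span_eq_of_associated_toInteger_sub_one_sq (by omega)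
    (hζ.finrank_adjoin_add_inv (by omega)) (hθ ▸ hassoc)
  have : (Ideal.span {θj - θk}).IsPrime :=
    Ideal.isPrime_of_irreducible_absNorm (by rwa [hnorm])
  have hr_mem : ((r : ℕ) : 𝓞 ℚ⟮ζ + ζ⁻¹⟯) ∈ Ideal.span {θj - θk} := by
    simpa only [hnorm] using Ideal.absNorm_mem (Ideal.span {θj - θk})
  rw [hζ.eq_comap_span_toInteger_sub_one 𝔯 h𝔯r, hζ.eq_comap_span_toInteger_sub_one _ hr_mem]

theorem span_theta_sub_theta_eq (r : ℕ+) (hr : (r : ℕ).Prime) (hr5 : 5 ≤ (r : ℕ))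
    (ζ : CyclotomicField r ℚ) (hζ : IsPrimitiveRoot ζ (r : ℕ))
    (K : IntermediateField ℚ (CyclotomicField r ℚ)) (hK : K = ℚ⟮ζ + ζ⁻¹⟯)
    (𝔯 : Ideal (𝓞 K)) (h𝔯 : 𝔯.IsPrime) (h𝔯r : ((r : ℕ) : 𝓞 K) ∈ 𝔯) (h𝔯bot : 𝔯 ≠ ⊥)
    (j k : ℕ) (hj1 : 1 ≤ j) (hjk : j < k) (hk : k ≤ ((r : ℕ) - 1) / 2)
    (θj θk : 𝓞 K)
    (hθj : algebraMap K (CyclotomicField r ℚ) (θj : K) = ζ ^ j + ζ⁻¹ ^ j)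
    (hθk : algebraMap K (CyclotomicField r ℚ) (θk : K) = ζ ^ k + ζ⁻¹ ^ k) :
    Ideal.span {θj - θk} = 𝔯 :=
  span_theta_sub_theta_eq_general r hr ζ hζ K hK 𝔯 h𝔯 h𝔯r j k hjk hk θj θk hθj hθk
end

section
/- Let a, b be coprime integers, not both odd, with b odd, r an odd prime, and suppose a^{2p} + b^{2q} = c^r for some integer c. Then there exist coprime integers a₀, b₀ such that a^p + b^q·i = (a₀ + b₀·i)^r in ℤ[i] (after possibly multiplying a₀ + b₀·i by a unit) and c = a₀² + b₀². -/
/-!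
Put `z = a ^ p + b ^ q i`, so that `z * conj z = N z = c ^ r`. Any common divisor of `z` and
`conj z` divides `2 a ^ p`, `2 b ^ q` and `N z`; as `a ^ p, b ^ q` are coprime and `N z` is odd,
`z` and `conj z` are coprime. Since `ℤ[i]` is a PID, `z` is then a unit times an `r`-th power
`w ^ r`; taking norms gives `c = N w` because `r` is odd, and the real part of a Bézout
identity for the coprime pair `w, conj w` is one for `re w, im w`.
-/

namespace GaussianInt

theorem isCoprime_star_of_isCoprime_re_im {z : GaussianInt} (hz : IsCoprime z.re z.im)
    (hn : Odd z.norm) : IsCoprime z (star z) := by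
  obtain ⟨u, v, huv⟩ := hz
  obtain ⟨m, n, hmn⟩ := Int.isCoprime_two_left.mpr hn
  set i : GaussianInt := Zsqrtd.sqrtd
  have hi : i * i = -1 := by ext <;> simp [i]
  have hre : (z.re : GaussianInt) * 2 = z + star z := by ext <;> simp; ring
  have him : (z.im : GaussianInt) * 2 * i = z - star z := by ext <;> simp [i]; ring
  have hnorm : (z.norm : GaussianInt) = z * star z := Zsqrtd.norm_eq_mul_conj z
  have hbezout : (m * 2 * (u * z.re + v * z.im) + n * z.norm : GaussianInt) = 1 := by
    exact_mod_cast (show m * 2 * (u * z.re + v * z.im) + n * z.norm = 1 by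
      rw [huv]; linear_combination hmn)
  -- rewrite `2 re z`, `2 im z` and `N z` in `hbezout` through `z` and `conj z`
  refine ⟨m * u - m * v * i + n * star z, m * u + m * v * i, ?_⟩
  linear_combination hbezout - m * u * hre + m * v * i * him - n * hnorm - 2 * m * v * z.im * hi

theorem isCoprime_re_im_of_isCoprime_star {z : GaussianInt} (h : IsCoprime z (star z)) :
    IsCoprime z.re z.im := by
  obtain ⟨u, v, huv⟩ := h
  refine ⟨(u + v).re, -(u - v).im, ?_⟩
  have hre := congrArg Zsqrtd.re huv
  simp only [Zsqrtd.re_add, Zsqrtd.re_mul, Zsqrtd.re_star, Zsqrtd.im_star, Zsqrtd.re_one] at hre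
  simp only [Zsqrtd.re_add, Zsqrtd.im_sub]
  linear_combination hre

theorem norm_unit (u : GaussianIntˣ) : (u : GaussianInt).norm = 1 :=
  (Zsqrtd.norm_eq_one_iff' (by norm_num) _).mpr u.isUnit

theorem exists_eq_unit_mul_pow_of_norm_eq_pow {z : GaussianInt} {c : ℤ} {r : ℕ} (hr : Odd r)
    (hz : IsCoprime z (star z)) (hn : z.norm = c ^ r) :
    ∃ w : GaussianInt, IsCoprime w.re w.im ∧ (∃ u : GaussianIntˣ, z = u * w ^ r) ∧
      c = w.norm := by
  have hmul : z * star z = (c : GaussianInt) ^ r := by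
    rw [← Zsqrtd.norm_eq_mul_conj, hn, Int.cast_pow]
  obtain ⟨w, u, hw⟩ := exists_associated_pow_of_mul_eq_pow' hz hmul
  have hzw : z = u * w ^ r := by rw [← hw, mul_comm]
  refine ⟨w, ?_, ⟨u, hzw⟩, ?_⟩
  · have hdvd : w ∣ z := hzw ▸ (dvd_pow_self w hr.pos.ne').mul_left _
    exact isCoprime_re_im_of_isCoprime_star <|
      (hz.of_isCoprime_of_dvd_left hdvd).of_isCoprime_of_dvd_right
        (map_dvd (starRingEnd GaussianInt) hdvd)
  · have hpow : c ^ r = w.norm ^ r := by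
      rw [← hn, hzw, Zsqrtd.norm_mul, norm_unit, one_mul]
      exact map_pow Zsqrtd.normMonoidHom w r
    exact hr.strictMono_pow.injective hpow

end GaussianInt

theorem gaussian_descent_general (p q r : ℕ) (hp : p.Prime)
    (hrodd : Odd r)
    (a b c : ℤ) (hab : IsCoprime a b) (ha : Even a) (hb : Odd b)
    (h : a ^ (2 * p) + b ^ (2 * q) = c ^ r) :
    ∃ a₀ b₀ : ℤ, IsCoprime a₀ b₀ ∧
      (∃ u : GaussianIntˣ,
        (⟨a ^ p, b ^ q⟩ : GaussianInt) = (u : GaussianInt) * (⟨a₀, b₀⟩ : GaussianInt) ^ r) ∧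
      c = a₀ ^ 2 + b₀ ^ 2 := by
  set z : GaussianInt := ⟨a ^ p, b ^ q⟩
  have hnorm : z.norm = c ^ r := by rw [← h, Zsqrtd.norm_def]; ring
  have hodd : Odd z.norm := by
    rw [hnorm, ← h]
    exact (Int.even_pow.mpr ⟨ha, mul_ne_zero two_ne_zero hp.ne_zero⟩).add_odd hb.pow
  obtain ⟨w, hw, hzw, hc⟩ := GaussianInt.exists_eq_unit_mul_pow_of_norm_eq_pow hrodd
    (GaussianInt.isCoprime_star_of_isCoprime_re_im hab.pow hodd) hnorm
  exact ⟨w.re, w.im, hw, hzw, by rw [hc, Zsqrtd.norm_def]; ring⟩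

theorem gaussian_descent (p q r : ℕ) (hp : p.Prime) (hq : q.Prime)
    (hr : r.Prime) (hrodd : Odd r)
    (a b c : ℤ) (hab : IsCoprime a b) (ha : Even a) (hb : Odd b)
    (h : a ^ (2 * p) + b ^ (2 * q) = c ^ r) :
    ∃ a₀ b₀ : ℤ, IsCoprime a₀ b₀ ∧
      (∃ u : GaussianIntˣ,
        (⟨a ^ p, b ^ q⟩ : GaussianInt) = (u : GaussianInt) * (⟨a₀, b₀⟩ : GaussianInt) ^ r) ∧
      c = a₀ ^ 2 + b₀ ^ 2 :=
  gaussian_descent_general p q r hp hrodd a b c hab ha hb h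
end

section
/- Let r ≥ 5 be a prime, ζ a primitive r-th root of unity, θ_j = ζ^j + ζ^{-j}, and a₀, b₀ integers. Then for each j with 1 ≤ j ≤ (r-1)/2, ((a₀+b₀i) + (a₀−b₀i)ζ^j)·((a₀+b₀i) + (a₀−b₀i)ζ^{-j}) = (θ_j + 2)·a₀² + (θ_j − 2)·b₀², and consequently (1/2)·((a₀+b₀i)^r + (a₀−b₀i)^r) = a₀ · ∏_{j=1}^{(r-1)/2} ((θ_j+2)a₀² + (θ_j−2)b₀²). -/
/-! Since `r` is odd, `A ^ r + B ^ r = ∏_{j < r} (A + B ζ ^ j)`. Pairing the factor `j` with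
`r - j`, where `ζ ^ (r - j) = ζ ^ (-j)`, leaves the factor `A + B` for `j = 0` and the products
`(A + B ζ ^ j) (A + B ζ ^ (-j)) = A ^ 2 + B ^ 2 + A B θ_j`. For `A = a₀ + b₀ i`, `B = a₀ - b₀ i`
one has `A + B = 2 a₀`, `A ^ 2 + B ^ 2 = 2 (a₀ ^ 2 - b₀ ^ 2)` and `A B = a₀ ^ 2 + b₀ ^ 2`. -/

open Complex Finset

theorem IsPrimitiveRoot.nthRootsFinset_one_eq_image_range {R : Type*} [CommRing R] [IsDomain R]
    [DecidableEq R] {ζ : R} {n : ℕ} (h : IsPrimitiveRoot ζ n) (hn : 0 < n) :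
    Polynomial.nthRootsFinset n (1 : R) = (range n).image (ζ ^ ·) := by
  have : NeZero n := ⟨hn.ne'⟩
  ext μ
  simp only [Polynomial.mem_nthRootsFinset hn, mem_image, mem_range]
  constructor
  · exact h.eq_pow_of_pow_eq_one
  · rintro ⟨j, -, rfl⟩
    rw [pow_right_comm, h.pow_eq_one, one_pow]

theorem IsPrimitiveRoot.pow_add_pow_eq_prod_range {R : Type*} [CommRing R] [IsDomain R]
    {ζ : R} {n : ℕ} (h : IsPrimitiveRoot ζ n) (hodd : Odd n) (x y : R) :
    x ^ n + y ^ n = ∏ j ∈ range n, (x + y * ζ ^ j) := by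
  classical
  rw [h.pow_add_pow_eq_prod_add_mul x y hodd, h.nthRootsFinset_one_eq_image_range hodd.pos,
    prod_image h.injOn_pow]
  simp only [mul_comm]

theorem Finset.prod_range_two_mul_add_one {M : Type*} [CommMonoid M] (f : ℕ → M) (m : ℕ) :
    ∏ j ∈ range (2 * m + 1), f j = f 0 * ∏ j ∈ Icc 1 m, f j * f (2 * m + 1 - j) := by
  rw [prod_range_succ', two_mul, prod_range_add, ← prod_range_reflect (fun j => f (m + j + 1)),
    ← prod_mul_distrib, mul_comm, ← Ico_add_one_right_eq_Icc, prod_Ico_eq_prod_range]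
  congr 1
  refine prod_congr (by simp) fun j hj => ?_
  rw [mem_range] at hj
  congr 2 <;> omega

theorem IsPrimitiveRoot.pow_add_pow_eq_mul_prod_Icc {K : Type*} [Field K] {ζ : K} {m : ℕ}
    (h : IsPrimitiveRoot ζ (2 * m + 1)) (x y : K) :
    x ^ (2 * m + 1) + y ^ (2 * m + 1) =
      (x + y) * ∏ j ∈ Icc 1 m, (x + y * ζ ^ j) * (x + y * (ζ ^ j)⁻¹) := by
  rw [h.pow_add_pow_eq_prod_range (odd_two_mul_add_one m), prod_range_two_mul_add_one,
    pow_zero, mul_one]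
  refine congrArg _ (prod_congr rfl fun j hj => ?_)
  have hj : j ≤ 2 * m + 1 := by rw [mem_Icc] at hj; omega
  rw [pow_sub₀ ζ (h.ne_zero (by omega)) hj, h.pow_eq_one, one_mul]

theorem add_I_add_sub_I_mul_mul_inv (a b z : ℂ) (hz : z ≠ 0) :
    ((a + b * I) + (a - b * I) * z) * ((a + b * I) + (a - b * I) * z⁻¹) =
      (z + z⁻¹ + 2) * a ^ 2 + (z + z⁻¹ - 2) * b ^ 2 := by
  linear_combination (2 - (z + z⁻¹)) * b ^ 2 * I_sq + (a - b * I) ^ 2 * mul_inv_cancel₀ hz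

theorem descent_factorization (r : ℕ) (hr : r.Prime) (hr5 : 5 ≤ r)
    (ζ : ℂ) (hζ : IsPrimitiveRoot ζ r) (a₀ b₀ : ℤ) :
    (∀ j : ℕ, 1 ≤ j → j ≤ (r - 1) / 2 →
      (((a₀ : ℂ) + b₀ * I) + ((a₀ : ℂ) - b₀ * I) * ζ ^ j) *
        (((a₀ : ℂ) + b₀ * I) + ((a₀ : ℂ) - b₀ * I) * (ζ ^ j)⁻¹) =
      ((ζ ^ j + (ζ ^ j)⁻¹) + 2) * (a₀ : ℂ) ^ 2 + ((ζ ^ j + (ζ ^ j)⁻¹) - 2) * (b₀ : ℂ) ^ 2) ∧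
    (1 / 2 * (((a₀ : ℂ) + b₀ * I) ^ r + ((a₀ : ℂ) - b₀ * I) ^ r) =
      (a₀ : ℂ) * ∏ j ∈ Finset.Icc 1 ((r - 1) / 2),
        (((ζ ^ j + (ζ ^ j)⁻¹) + 2) * (a₀ : ℂ) ^ 2 +
          ((ζ ^ j + (ζ ^ j)⁻¹) - 2) * (b₀ : ℂ) ^ 2)) := by
  have hζj (j : ℕ) : ζ ^ j ≠ 0 := pow_ne_zero j (hζ.ne_zero (by omega))
  refine ⟨fun j _ _ => add_I_add_sub_I_mul_mul_inv _ _ _ (hζj j), ?_⟩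
  obtain ⟨m, rfl⟩ := hr.odd_of_ne_two (by omega)
  rw [show (2 * m + 1 - 1) / 2 = m by omega, hζ.pow_add_pow_eq_mul_prod_Icc]
  simp only [← add_I_add_sub_I_mul_mul_inv _ _ _ (hζj _)]
  ring
end

section
/- Let K be a number field in which 2 is inert, with 𝔓 = 2O_K, and let S be a finite set of primes of O_K containing 𝔓. Suppose ν ∈ O_K^× and λ' = (1+ν)(1−ν) ∈ O_S^× with v_𝔓(λ') = s₀ ≥ 5. If v_𝔓(1+ν) = 1, then λ'' = −(1−ν)²/(4ν) and μ'' = (1+ν)²/(4ν) satisfy λ'', μ'' ∈ O_S^×, λ'' + μ'' = 1, and v_𝔓(λ'') = 2s₀ − 4 > s₀. -/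
open NumberField IsDedekindDomain
open scoped Classical

/-- The additive `v`-adic valuation of an element of a number field, valued in `ℤ`
(with the convention that the valuation of `0` is `0`). -/
noncomputable def addVal (K : Type*) [Field K] [NumberField K]
    (v : HeightOneSpectrum (𝓞 K)) (x : K) : ℤ :=
  if hx : x = 0 then 0
  else - Multiplicative.toAdd (WithZero.unzero ((Valuation.ne_zero_iff _).mpr hx :
    (v.valuation K : Valuation K _) x ≠ 0))

/-- `x` is an `S`-unit: it is nonzero and has valuation `0` at every prime outside `S`. -/
def IsSUnit (K : Type*) [Field K] [NumberField K]
    (S : Finset (HeightOneSpectrum (𝓞 K))) (x : K) : Prop :=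
  x ≠ 0 ∧ ∀ v : HeightOneSpectrum (𝓞 K), v ∉ S → addVal K v x = 0

/-! Since `1 + ν` and `1 - ν` are integral and their product is an `S`-unit, each of them is an
`S`-unit; so are `ν` and `2` (whose only prime is `𝔓 ∈ S`), hence so are `λ''` and `μ''`.
At `𝔓`, `v(1 - ν) = s₀ - 1`, so `v(λ'') = 2 (s₀ - 1) - 2 v(2) = 2 s₀ - 4`, which exceeds
`s₀` because `s₀ ≥ 5`. -/

open WithZero

section AddVal

variable {K : Type*} [Field K] [NumberField K] (v : HeightOneSpectrum (𝓞 K))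

-- Both sides take the junk value `0` at `x = 0`.
theorem addVal_eq_neg_log (x : K) : addVal K v x = -log (v.valuation K x) := by
  by_cases hx : x = 0
  · simp [addVal, hx]
  · rw [addVal, dif_neg hx, toAdd_unzero_eq_log]

theorem addVal_mul {x y : K} (hx : x ≠ 0) (hy : y ≠ 0) :
    addVal K v (x * y) = addVal K v x + addVal K v y := by
  simp only [addVal_eq_neg_log, map_mul, log_mul ((v.valuation K).ne_zero_iff.mpr hx)
    ((v.valuation K).ne_zero_iff.mpr hy), neg_add]

theorem addVal_inv (x : K) : addVal K v x⁻¹ = -addVal K v x := by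
  simp only [addVal_eq_neg_log, map_inv₀, log_inv]

theorem addVal_div {x y : K} (hx : x ≠ 0) (hy : y ≠ 0) :
    addVal K v (x / y) = addVal K v x - addVal K v y := by
  rw [div_eq_mul_inv, addVal_mul v hx (inv_ne_zero hy), addVal_inv, sub_eq_add_neg]

theorem addVal_pow (x : K) (k : ℕ) : addVal K v (x ^ k) = k * addVal K v x := by
  simp only [addVal_eq_neg_log, map_pow, log_pow, nsmul_eq_mul, mul_neg]

theorem addVal_neg (x : K) : addVal K v (-x) = addVal K v x := by
  simp only [addVal_eq_neg_log, Valuation.map_neg]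

theorem addVal_algebraMap_nonneg (r : 𝓞 K) : 0 ≤ addVal K v (algebraMap (𝓞 K) K r) := by
  rw [addVal_eq_neg_log, neg_nonneg, v.valuation_of_algebraMap]
  by_cases hr : v.intValuation r = 0
  · rw [hr, log_zero]
  · exact (log_le_iff_le_exp hr).mpr (v.intValuation_le_one r)

theorem addVal_algebraMap_of_notMem {r : 𝓞 K} (hr : r ∉ v.asIdeal) :
    addVal K v (algebraMap (𝓞 K) K r) = 0 := by
  rw [addVal_eq_neg_log, v.valuation_of_algebraMap,
    HeightOneSpectrum.intValuation_eq_one_iff.mpr hr, log_one, neg_zero]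

theorem addVal_algebraMap_unit (u : (𝓞 K)ˣ) : addVal K v (algebraMap (𝓞 K) K u) = 0 :=
  addVal_algebraMap_of_notMem v fun hu ↦
    v.isPrime.ne_top (Ideal.eq_top_of_isUnit_mem _ hu u.isUnit)

theorem addVal_algebraMap_of_asIdeal_eq_span {r : 𝓞 K} (hr : r ≠ 0)
    (hv : v.asIdeal = Ideal.span {r}) : addVal K v (algebraMap (𝓞 K) K r) = 1 := by
  rw [addVal_eq_neg_log, v.valuation_of_algebraMap, v.intValuation_singleton hr hv, log_exp,
    neg_neg]

theorem addVal_algebraMap_of_ne_of_asIdeal_eq_span {P : HeightOneSpectrum (𝓞 K)} {r : 𝓞 K}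
    (hP : P.asIdeal = Ideal.span {r}) (hvP : v ≠ P) :
    addVal K v (algebraMap (𝓞 K) K r) = 0 := by
  refine addVal_algebraMap_of_notMem v fun hr ↦ hvP ?_
  have hle : P.asIdeal ≤ v.asIdeal := hP ▸ (Ideal.span_singleton_le_iff_mem _).mpr hr
  exact (HeightOneSpectrum.ext (P.isMaximal.eq_of_le v.isPrime.ne_top hle)).symm

end AddVal

namespace IsSUnit

variable {K : Type*} [Field K] [NumberField K] {S : Finset (HeightOneSpectrum (𝓞 K))} {x y : K}

theorem mul (hx : IsSUnit K S x) (hy : IsSUnit K S y) : IsSUnit K S (x * y) :=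
  ⟨mul_ne_zero hx.1 hy.1, fun v hv ↦ by
    rw [addVal_mul v hx.1 hy.1, hx.2 v hv, hy.2 v hv, add_zero]⟩

theorem div (hx : IsSUnit K S x) (hy : IsSUnit K S y) : IsSUnit K S (x / y) :=
  ⟨div_ne_zero hx.1 hy.1, fun v hv ↦ by
    rw [addVal_div v hx.1 hy.1, hx.2 v hv, hy.2 v hv, sub_zero]⟩

theorem pow (hx : IsSUnit K S x) (k : ℕ) : IsSUnit K S (x ^ k) :=
  ⟨pow_ne_zero k hx.1, fun v hv ↦ by rw [addVal_pow, hx.2 v hv, mul_zero]⟩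

theorem neg (hx : IsSUnit K S x) : IsSUnit K S (-x) :=
  ⟨neg_ne_zero.mpr hx.1, fun v hv ↦ by rw [addVal_neg, hx.2 v hv]⟩

theorem of_mul_left (hxy : IsSUnit K S (x * y)) (hx : ∀ v, 0 ≤ addVal K v x)
    (hy : ∀ v, 0 ≤ addVal K v y) : IsSUnit K S x := by
  refine ⟨left_ne_zero_of_mul hxy.1, fun v hv ↦ ?_⟩
  have := hxy.2 v hv
  rw [addVal_mul v (left_ne_zero_of_mul hxy.1) (right_ne_zero_of_mul hxy.1)] at this
  linarith [hx v, hy v]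

theorem of_mul_right (hxy : IsSUnit K S (x * y)) (hx : ∀ v, 0 ≤ addVal K v x)
    (hy : ∀ v, 0 ≤ addVal K v y) : IsSUnit K S y :=
  of_mul_left (mul_comm x y ▸ hxy) hy hx

end IsSUnit

section SUnits

variable {K : Type*} [Field K] [NumberField K] {S : Finset (HeightOneSpectrum (𝓞 K))}

theorem isSUnit_algebraMap_unit (u : (𝓞 K)ˣ) : IsSUnit K S (algebraMap (𝓞 K) K u) :=
  ⟨by simp, fun v _ ↦ addVal_algebraMap_unit v u⟩

theorem isSUnit_algebraMap_of_asIdeal_eq_span {P : HeightOneSpectrum (𝓞 K)} {r : 𝓞 K}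
    (hr : r ≠ 0) (hP : P.asIdeal = Ideal.span {r}) (hPS : P ∈ S) :
    IsSUnit K S (algebraMap (𝓞 K) K r) :=
  ⟨by simpa using hr, fun v hv ↦
    addVal_algebraMap_of_ne_of_asIdeal_eq_span v hP fun h ↦ hv (h ▸ hPS)⟩

end SUnits

theorem valuation_growth (K : Type*) [Field K] [NumberField K]
    (P : HeightOneSpectrum (𝓞 K)) (hP : P.asIdeal = Ideal.span {(2 : 𝓞 K)})
    (S : Finset (HeightOneSpectrum (𝓞 K))) (hPS : P ∈ S)
    (ν : (𝓞 K)ˣ) (n : K) (hn : n = algebraMap (𝓞 K) K (ν : 𝓞 K))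
    (hlam' : IsSUnit K S ((1 + n) * (1 - n)))
    (s₀ : ℤ) (hs₀ : s₀ = addVal K P ((1 + n) * (1 - n))) (hs₀5 : 5 ≤ s₀)
    (h1 : addVal K P (1 + n) = 1) :
    IsSUnit K S (-(1 - n) ^ 2 / (4 * n)) ∧ IsSUnit K S ((1 + n) ^ 2 / (4 * n)) ∧
      -(1 - n) ^ 2 / (4 * n) + (1 + n) ^ 2 / (4 * n) = 1 ∧
      addVal K P (-(1 - n) ^ 2 / (4 * n)) = 2 * s₀ - 4 ∧
      s₀ < addVal K P (-(1 - n) ^ 2 / (4 * n)) := by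
  rw [show (4 : K) = 2 ^ 2 by norm_num]
  have h2 : IsSUnit K S 2 := by
    rw [← map_ofNat (algebraMap (𝓞 K) K) 2]
    exact isSUnit_algebraMap_of_asIdeal_eq_span two_ne_zero hP hPS
  have hν : IsSUnit K S n := hn ▸ isSUnit_algebraMap_unit ν
  have h4n : IsSUnit K S (2 ^ 2 * n) := (h2.pow 2).mul hν
  have hplus_int : ∀ v, 0 ≤ addVal K v (1 + n) := fun v ↦ by
    simpa only [map_add, map_one, ← hn] using addVal_algebraMap_nonneg v (1 + (ν : 𝓞 K))
  have hminus_int : ∀ v, 0 ≤ addVal K v (1 - n) := fun v ↦ by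
    simpa only [map_sub, map_one, ← hn] using addVal_algebraMap_nonneg v (1 - (ν : 𝓞 K))
  have hplus := hlam'.of_mul_left hplus_int hminus_int
  have hminus := hlam'.of_mul_right hplus_int hminus_int
  have hv2 : addVal K P 2 = 1 := by
    rw [← map_ofNat (algebraMap (𝓞 K) K) 2]
    exact addVal_algebraMap_of_asIdeal_eq_span P two_ne_zero hP
  have hvminus : addVal K P (1 - n) = s₀ - 1 := by
    rw [hs₀, addVal_mul P hplus.1 hminus.1, h1]
    ring
  have hval : addVal K P (-(1 - n) ^ 2 / (2 ^ 2 * n)) = 2 * s₀ - 4 := by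
    rw [addVal_div P (hminus.pow 2).neg.1 h4n.1, addVal_neg, addVal_pow, hvminus,
      addVal_mul P (h2.pow 2).1 hν.1, addVal_pow, hv2, hn, addVal_algebraMap_unit]
    push_cast
    ring
  refine ⟨(hminus.pow 2).neg.div h4n, (hplus.pow 2).div h4n, ?_, hval, by omega⟩
  field_simp [hν.1]
  ring
end
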